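/- Let A be positive semidefinite and X, Y nonzero (in A-seminorm) operators admitting A-adjoints. Then dw_A(X ± Y)² ≤ 4[ (‖X‖_A² + ‖Y‖_A²)² + w_𝔸([[0,X],[Y,0]])² ], where 𝔸 = diag(A,A). -/

import Mathlib

/-!
Since `A ≥ 0`, `⟨·,·⟩_A` is a semi-inner product, so `‖·‖_A` obeys Cauchy–Schwarz and the
triangle inequality; an `A`-adjoint makes `T` map `A`-null vectors to `A`-null vectors, whence
`‖Tx‖_A ≤ ‖T‖_A ‖x‖_A`. For an `A`-unit `x` and `|s| = 1` pick `u` with `u² = s̄`: the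
`𝔸`-unit vector `z = (x, u x) / √2` satisfies `⟨(X + sY)x, x⟩_A = 2u ⟨[[0,X],[Y,0]] z, z⟩_𝔸`,
so `|⟨(X ± Y)x, x⟩_A| ≤ 2 w_𝔸`. Together with `‖(X ± Y)x‖_A ≤ ‖X‖_A + ‖Y‖_A` and
`(a + b)⁴ ≤ 4 (a² + b²)²` this bounds every term of the supremum defining `dw_A(X ± Y)`.
-/

noncomputable section

namespace DW

variable {H : Type*} [NormedAddCommGroup H] [InnerProductSpace ℂ H]

/-- The semi-inner product induced by `A`: `⟨x,y⟩_A = ⟨Ax, y⟩`. -/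
def innA (A : H →L[ℂ] H) (x y : H) : ℂ := inner ℂ (A x) y

/-- The seminorm induced by `A`. -/
def normA (A : H →L[ℂ] H) (x : H) : ℝ := Real.sqrt (innA A x x).re

/-- `T` is `A`-bounded. -/
def IsABounded (A T : H →L[ℂ] H) : Prop := ∃ c > 0, ∀ x, normA A (T x) ≤ c * normA A x

/-- `S` is an `A`-adjoint of `T`. -/
def IsAAdjointPair (A T S : H →L[ℂ] H) : Prop := ∀ x y, innA A (T x) y = innA A x (S y)

/-- The `A`-operator seminorm. -/
def opNormA (A T : H →L[ℂ] H) : ℝ := sSup {r | ∃ x, normA A x = 1 ∧ r = normA A (T x)}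

/-- The `A`-minimum modulus. -/
def mA (A T : H →L[ℂ] H) : ℝ := sInf {r | ∃ x, normA A x = 1 ∧ r = normA A (T x)}

/-- The `A`-numerical radius. -/
def wA (A T : H →L[ℂ] H) : ℝ :=
  sSup {r | ∃ x, normA A x = 1 ∧ r = ‖innA A (T x) x‖}

/-- The `A`-Crawford number. -/
def cA (A T : H →L[ℂ] H) : ℝ :=
  sInf {r | ∃ x, normA A x = 1 ∧ r = ‖innA A (T x) x‖}

/-- The `A`-Davis-Wielandt radius. -/
def dwA (A T : H →L[ℂ] H) : ℝ :=
  sSup {r | ∃ x, normA A x = 1 ∧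
    r = Real.sqrt (‖innA A (T x) x‖ ^ 2 + normA A (T x) ^ 4)}

/-- The semi-inner product on `H ⊕ H` induced by `𝔸 = diag(A,A)`. -/
def innA2 (A : H →L[ℂ] H) (z w : H × H) : ℂ := innA A z.1 w.1 + innA A z.2 w.2

/-- The seminorm on `H ⊕ H` induced by `𝔸 = diag(A,A)`. -/
def normA2 (A : H →L[ℂ] H) (z : H × H) : ℝ := Real.sqrt (innA2 A z z).re

/-- The `𝔸`-numerical radius on `H ⊕ H`, `𝔸 = diag(A,A)`. -/
def wA2 (A : H →L[ℂ] H) (T : H × H →L[ℂ] H × H) : ℝ :=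
  sSup {r | ∃ z, normA2 A z = 1 ∧ r = ‖innA2 A (T z) z‖}

/-- The `𝔸`-Davis-Wielandt radius on `H ⊕ H`, `𝔸 = diag(A,A)`. -/
def dwA2 (A : H →L[ℂ] H) (T : H × H →L[ℂ] H × H) : ℝ :=
  sSup {r | ∃ z, normA2 A z = 1 ∧
    r = Real.sqrt (‖innA2 A (T z) z‖ ^ 2 + normA2 A (T z) ^ 4)}

/-- The block operator `[[0, X], [Y, 0]]` on `H ⊕ H`. -/
def offDiag (X Y : H →L[ℂ] H) : H × H →L[ℂ] H × H :=
  (X.comp (ContinuousLinearMap.snd ℂ H H)).prod (Y.comp (ContinuousLinearMap.fst ℂ H H))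

end DW

namespace DW

variable {H : Type*} [NormedAddCommGroup H] [InnerProductSpace ℂ H] {A : H →L[ℂ] H}

open ComplexConjugate

lemma innA_conj_symm (hA : A.IsPositive) (x y : H) : conj (innA A y x) = innA A x y := by
  rw [innA, inner_conj_symm, innA]
  exact (hA.isSymmetric x y).symm

lemma innA_self_re_nonneg (hA : A.IsPositive) (x : H) : 0 ≤ (innA A x x).re := by
  simpa [innA] using (Complex.le_def.mp (hA.inner_nonneg_left x)).1

abbrev preInnerProductCoreA (hA : A.IsPositive) : PreInnerProductSpace.Core ℂ H where
  inner := innA A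
  conj_inner_symm := innA_conj_symm hA
  re_inner_nonneg := innA_self_re_nonneg hA
  add_left x y z := by simp only [innA, map_add, inner_add_left]
  smul_left x y r := by simp only [innA, map_smul, inner_smul_left]

lemma norm_innA_le (hA : A.IsPositive) (x y : H) : ‖innA A x y‖ ≤ normA A x * normA A y :=
  @InnerProductSpace.Core.norm_inner_le_norm ℂ H _ _ _ (preInnerProductCoreA hA) x y

def seminormA (hA : A.IsPositive) : Seminorm ℂ H :=
  letI := preInnerProductCoreA hA
  letI : Norm H := InnerProductSpace.Core.toNorm (𝕜 := ℂ)
  have core := InnerProductSpace.Core.toSeminormedSpaceCore (preInnerProductCoreA hA)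
  Seminorm.of (normA A) core.norm_triangle core.norm_smul

lemma normA_add_le (hA : A.IsPositive) (x y : H) : normA A (x + y) ≤ normA A x + normA A y :=
  map_add_le_add (seminormA hA) x y

lemma normA_smul (hA : A.IsPositive) (c : ℂ) (x : H) : normA A (c • x) = ‖c‖ * normA A x :=
  map_smul_eq_mul (seminormA hA) c x

lemma normA_nonneg (x : H) : 0 ≤ normA A x := Real.sqrt_nonneg _

lemma normA_sq (hA : A.IsPositive) (x : H) : normA A x ^ 2 = (innA A x x).re :=
  Real.sq_sqrt (innA_self_re_nonneg hA x)

lemma normA_apply_eq_zero {T T' : H →L[ℂ] H} (hA : A.IsPositive) (hT : IsAAdjointPair A T T')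
    {x : H} (hx : normA A x = 0) : normA A (T x) = 0 := by
  have h : (innA A (T x) (T x)).re ≤ 0 := calc
    (innA A (T x) (T x)).re ≤ ‖innA A x (T' (T x))‖ := hT x (T x) ▸ Complex.re_le_norm _
    _ ≤ normA A x * normA A (T' (T x)) := norm_innA_le hA _ _
    _ = 0 := by rw [hx, zero_mul]
  rw [normA, le_antisymm h (innA_self_re_nonneg hA _), Real.sqrt_zero]

lemma opNormA_nonneg (T : H →L[ℂ] H) : 0 ≤ opNormA A T :=
  Real.sSup_nonneg fun _ ⟨_, _, hr⟩ => hr ▸ normA_nonneg _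

-- `sSup` of a set of reals that is not bounded above is `0`.
lemma bddAbove_of_opNormA_ne_zero {T : H →L[ℂ] H} (hT : opNormA A T ≠ 0) :
    BddAbove {r | ∃ x, normA A x = 1 ∧ r = normA A (T x)} :=
  not_not.mp fun h => hT (Real.sSup_of_not_bddAbove h)

lemma normA_apply_le_opNormA_mul {T T' : H →L[ℂ] H} (hA : A.IsPositive)
    (hT' : IsAAdjointPair A T T') (hT : BddAbove {r | ∃ x, normA A x = 1 ∧ r = normA A (T x)})
    (x : H) : normA A (T x) ≤ opNormA A T * normA A x := by
  rcases (normA_nonneg x).eq_or_lt with hx | hx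
  · rw [normA_apply_eq_zero hA hT' hx.symm, ← hx, mul_zero]
  · set u : H := ((normA A x)⁻¹ : ℂ) • x
    have hu : normA A u = 1 := by
      rw [normA_smul hA, norm_inv, Complex.norm_real, Real.norm_of_nonneg hx.le,
        inv_mul_cancel₀ hx.ne']
    have hTu : normA A (T u) = (normA A x)⁻¹ * normA A (T x) := by
      rw [map_smul, normA_smul hA, norm_inv, Complex.norm_real, Real.norm_of_nonneg hx.le]
    have h : normA A (T u) ≤ opNormA A T := le_csSup hT ⟨u, hu, rfl⟩
    rwa [hTu, inv_mul_le_iff₀ hx, mul_comm] at h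

lemma innA2_offDiag (X Y : H →L[ℂ] H) (z : H × H) :
    innA2 A (offDiag X Y z) z = innA A (X z.2) z.1 + innA A (Y z.1) z.2 := rfl

lemma normA_sq_add_normA_sq (hA : A.IsPositive) {z : H × H} (hz : normA2 A z = 1) :
    normA A z.1 ^ 2 + normA A z.2 ^ 2 = 1 := by
  rw [normA_sq hA, normA_sq hA, ← Complex.add_re]
  exact Real.sqrt_eq_one.mp hz

lemma bddAbove_wA2_offDiag {X Y : H →L[ℂ] H} {M N : ℝ} (hA : A.IsPositive) (hM : 0 ≤ M)
    (hN : 0 ≤ N) (hX : ∀ x, normA A (X x) ≤ M * normA A x)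
    (hY : ∀ x, normA A (Y x) ≤ N * normA A x) :
    BddAbove {r | ∃ z, normA2 A z = 1 ∧ r = ‖innA2 A (offDiag X Y z) z‖} := by
  refine ⟨M + N, ?_⟩
  rintro _ ⟨z, hz, rfl⟩
  have hsum := normA_sq_add_normA_sq hA hz
  have h1 := normA_nonneg (A := A) z.1
  have h2 := normA_nonneg (A := A) z.2
  calc ‖innA2 A (offDiag X Y z) z‖
      ≤ ‖innA A (X z.2) z.1‖ + ‖innA A (Y z.1) z.2‖ := norm_add_le _ _
    _ ≤ normA A (X z.2) * normA A z.1 + normA A (Y z.1) * normA A z.2 :=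
        add_le_add (norm_innA_le hA _ _) (norm_innA_le hA _ _)
    _ ≤ M * normA A z.2 * normA A z.1 + N * normA A z.1 * normA A z.2 := by
        gcongr
        exacts [hX _, hY _]
    _ ≤ M + N := by
        nlinarith [mul_nonneg hM (sq_nonneg (normA A z.1 - normA A z.2)),
          mul_nonneg hN (sq_nonneg (normA A z.1 - normA A z.2))]

lemma norm_innA_add_smul_le_two_mul_wA2 {X Y : H →L[ℂ] H}
    (hw : BddAbove {r | ∃ z, normA2 A z = 1 ∧ r = ‖innA2 A (offDiag X Y z) z‖})
    {s : ℂ} (hs : ‖s‖ = 1) {x : H} (hx : normA A x = 1) :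
    ‖innA A ((X + s • Y) x) x‖ ≤ 2 * wA2 A (offDiag X Y) := by
  obtain ⟨u, hu⟩ := IsAlgClosed.exists_pow_nat_eq (conj s) two_pos
  have hu1 : ‖u‖ = 1 := by
    refine (pow_eq_one_iff_of_nonneg (norm_nonneg u) two_ne_zero).mp ?_
    rw [← norm_pow, hu, Complex.norm_conj, hs]
  have hcu : conj u * u = 1 := by rw [Complex.conj_mul', hu1]; norm_num
  set c : ℂ := (((√2)⁻¹ : ℝ) : ℂ)
  have hc : conj c * c = 1 / 2 := by
    rw [Complex.conj_ofReal, ← Complex.ofReal_mul, ← mul_inv, Real.mul_self_sqrt zero_le_two]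
    norm_num
  set z : H × H := (c • x, (c * u) • x)
  have hz : normA2 A z = 1 := by
    have : innA2 A z z = innA A x x := by
      simp only [innA2, z, innA, map_smul, inner_smul_left, inner_smul_right, map_mul]
      linear_combination (conj c * c * inner ℂ (A x) x) * hcu + 2 * inner ℂ (A x) x * hc
    rw [normA2, this]
    exact hx
  have hval : innA A ((X + s • Y) x) x = 2 * u * innA2 A (offDiag X Y z) z := by
    simp only [innA2_offDiag, z, innA, map_smul, inner_smul_left, inner_smul_right, map_mul,
      add_apply, smul_apply, map_add, inner_add_left]
    linear_combination (-2 * conj c * c * inner ℂ (A (X x)) x) * hcu - inner ℂ (A (Y x)) x * hu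
      - 2 * (inner ℂ (A (X x)) x + inner ℂ (A (Y x)) x * u ^ 2) * hc
  calc ‖innA A ((X + s • Y) x) x‖ = 2 * ‖innA2 A (offDiag X Y z) z‖ := by
        rw [hval, norm_mul, norm_mul, hu1]; norm_num
    _ ≤ 2 * wA2 A (offDiag X Y) := by gcongr; exact le_csSup hw ⟨z, hz, rfl⟩

lemma dwA_sq_le {T : H →L[ℂ] H} {a b : ℝ} (ha : ∀ x, normA A x = 1 → ‖innA A (T x) x‖ ≤ a)
    (hb : ∀ x, normA A x = 1 → normA A (T x) ≤ b) : dwA A T ^ 2 ≤ a ^ 2 + b ^ 4 := by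
  have hdw : dwA A T ≤ √(a ^ 2 + b ^ 4) := by
    refine Real.sSup_le (fun _ ⟨x, hx, hr⟩ => hr ▸ Real.sqrt_le_sqrt ?_) (Real.sqrt_nonneg _)
    exact add_le_add (pow_le_pow_left₀ (norm_nonneg _) (ha x hx) 2)
      (pow_le_pow_left₀ (normA_nonneg _) (hb x hx) 4)
  have h0 : 0 ≤ dwA A T := Real.sSup_nonneg fun _ ⟨_, _, hr⟩ => hr ▸ Real.sqrt_nonneg _
  calc dwA A T ^ 2 ≤ √(a ^ 2 + b ^ 4) ^ 2 := pow_le_pow_left₀ h0 hdw 2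
    _ = a ^ 2 + b ^ 4 := Real.sq_sqrt (by positivity)

lemma dwA_add_smul_sq_le {X Y X' Y' : H →L[ℂ] H} (hA : A.IsPositive)
    (hX' : IsAAdjointPair A X X') (hY' : IsAAdjointPair A Y Y')
    (hX : BddAbove {r | ∃ x, normA A x = 1 ∧ r = normA A (X x)})
    (hY : BddAbove {r | ∃ x, normA A x = 1 ∧ r = normA A (Y x)}) {s : ℂ} (hs : ‖s‖ = 1) :
    dwA A (X + s • Y) ^ 2 ≤
      4 * ((opNormA A X ^ 2 + opNormA A Y ^ 2) ^ 2 + wA2 A (offDiag X Y) ^ 2) := by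
  set M := opNormA A X
  set N := opNormA A Y
  have hXle := normA_apply_le_opNormA_mul hA hX' hX
  have hYle := normA_apply_le_opNormA_mul hA hY' hY
  have hw := bddAbove_wA2_offDiag hA (opNormA_nonneg X) (opNormA_nonneg Y) hXle hYle
  have hnorm (x : H) (hx : normA A x = 1) : normA A ((X + s • Y) x) ≤ M + N := calc
    normA A ((X + s • Y) x) ≤ normA A (X x) + normA A (s • Y x) := normA_add_le hA _ _
    _ = normA A (X x) + normA A (Y x) := by rw [normA_smul hA, hs, one_mul]
    _ ≤ M + N := by simpa only [hx, mul_one] using add_le_add (hXle x) (hYle x)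
  have hMN : (M + N) ^ 2 ≤ 2 * (M ^ 2 + N ^ 2) := by nlinarith [sq_nonneg (M - N)]
  calc dwA A (X + s • Y) ^ 2 ≤ (2 * wA2 A (offDiag X Y)) ^ 2 + (M + N) ^ 4 :=
        dwA_sq_le (fun _ hx => norm_innA_add_smul_le_two_mul_wA2 hw hs hx) hnorm
    _ ≤ 4 * ((M ^ 2 + N ^ 2) ^ 2 + wA2 A (offDiag X Y) ^ 2) := by
        nlinarith [pow_le_pow_left₀ (sq_nonneg _) hMN 2]

end DW

open DW

variable {H : Type*} [NormedAddCommGroup H] [InnerProductSpace ℂ H] [CompleteSpace H]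

theorem stmt17 (A X Y : H →L[ℂ] H) (hA : A.IsPositive)
    (hX : ∃ X', IsAAdjointPair A X X') (hY : ∃ Y', IsAAdjointPair A Y Y')
    (hX0 : opNormA A X ≠ 0) (hY0 : opNormA A Y ≠ 0) :
    dwA A (X + Y) ^ 2 ≤
      4 * ((opNormA A X ^ 2 + opNormA A Y ^ 2) ^ 2 + wA2 A (offDiag X Y) ^ 2) ∧
    dwA A (X - Y) ^ 2 ≤
      4 * ((opNormA A X ^ 2 + opNormA A Y ^ 2) ^ 2 + wA2 A (offDiag X Y) ^ 2) := by
  obtain ⟨X', hX'⟩ := hX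
  obtain ⟨Y', hY'⟩ := hY
  have key {s : ℂ} (hs : ‖s‖ = 1) := dwA_add_smul_sq_le hA hX' hY'
    (bddAbove_of_opNormA_ne_zero hX0) (bddAbove_of_opNormA_ne_zero hY0) hs
  constructor
  · simpa only [one_smul] using key norm_one
  · simpa only [neg_one_smul, ← sub_eq_add_neg] using key (s := -1) (by simp)
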